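/- In the fair-coin game (ρ = 1/2) with symmetric beta-binomial strategy (α = β > 0), consider a block {k+1, …, l} of rounds with s_k = 0 and s_l = 0 (equal numbers of heads and tails at times k and l, so l - k = 2m is even). Then the capital ratio satisfies K_l/K_k = 2^{2m}·(α + h_k)_m² / (2α + 2h_k)_{2m} = ∏_{j=0}^{m-1} 2(α + h_k + j)/(2(α + h_k + j) + 1) < 1, where h_k = k/2 is the number of heads at time k and (a)_m is the rising factorial. -/

import Mathlib

open Finset

/-- Rising factorial `(a)_m = a(a+1)⋯(a+m-1)`. -/
noncomputable def risingFactorial (a : ℝ) (m : ℕ) : ℝ := ∏ j ∈ range m, (a + j)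

/-- Fair-coin (`ρ = 1/2`) capital of the symmetric beta-binomial strategy (`β = α`) after
`n` rounds with `h` heads and `t = n - h` tails: `K_n = 2^n (α)_h (α)_t / (2α)_n`. -/
noncomputable def fairCapital (α : ℝ) (h t : ℕ) : ℝ :=
  2 ^ (h + t) * risingFactorial α h * risingFactorial α t / risingFactorial (2 * α) (h + t)

lemma rf_pos {a : ℝ} (ha : 0 < a) (m : ℕ) : 0 < risingFactorial a m := by
  apply Finset.prod_pos
  intro j _
  positivity

lemma rf_add (a : ℝ) (m n : ℕ) :
    risingFactorial a (m + n) = risingFactorial a m * risingFactorial (a + m) n := by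
  induction n with
  | zero => simp [risingFactorial]
  | succ n ih =>
    simp only [risingFactorial, prod_range_succ] at ih ⊢
    rw [show m + (n+1) = (m+n)+1 from rfl, prod_range_succ, ih]
    push_cast
    ring

lemma rf_dup (b : ℝ) (m : ℕ) :
    risingFactorial (2 * b) (2 * m)
      = (∏ j ∈ range m, 2 * (b + j)) * ∏ j ∈ range m, (2 * (b + j) + 1) := by
  induction m with
  | zero => simp [risingFactorial]
  | succ m ih =>
    rw [show 2 * (m+1) = (2*m) + 1 + 1 from by ring]
    simp only [risingFactorial] at ih ⊢
    rw [prod_range_succ, prod_range_succ, ih, prod_range_succ, prod_range_succ]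
    push_cast
    ring


/-- Over a block `{k+1, …, l}` with `s_k = 0 = s_l` (so `h_k = t_k`, `h_l = t_l`,
`l - k = 2m`), the fair-coin symmetric beta-binomial capital ratio satisfies
`K_l/K_k = 2^{2m} (α+h_k)_m² / (2α+2h_k)_{2m}
         = ∏_{j<m} 2(α+h_k+j)/(2(α+h_k+j)+1) < 1`. -/
theorem fairCoin_block_capital_ratio (α : ℝ) (hα : 0 < α) (hk m : ℕ) (hm : 1 ≤ m) :
    fairCapital α (hk + m) (hk + m) / fairCapital α hk hk
        = 2 ^ (2 * m) * risingFactorial (α + hk) m ^ 2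
            / risingFactorial (2 * α + 2 * hk) (2 * m) ∧
    2 ^ (2 * m) * risingFactorial (α + hk) m ^ 2
            / risingFactorial (2 * α + 2 * hk) (2 * m)
        = ∏ j ∈ range m, 2 * (α + hk + j) / (2 * (α + hk + j) + 1) ∧
    ∏ j ∈ range m, 2 * (α + hk + j) / (2 * (α + hk + j) + 1) < 1 := by
  have hb : (0:ℝ) < α + hk := by positivity
  have h2b : (2:ℝ) * α + 2 * hk = 2 * (α + hk) := by ring
  have hA := rf_pos hα hk
  have hB := rf_pos hb m
  have hC : (0:ℝ) < risingFactorial (2 * α) (2 * hk) := rf_pos (by positivity) _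
  have hD : (0:ℝ) < risingFactorial (2 * α + 2 * hk) (2 * m) := by
    rw [h2b]; exact rf_pos (by positivity) _
  have key1 : risingFactorial (2 * α) (2 * hk + 2 * m)
      = risingFactorial (2 * α) (2 * hk) * risingFactorial (2 * α + 2 * hk) (2 * m) := by
    rw [rf_add]; push_cast; ring_nf
  have key2 : risingFactorial α (hk + m)
      = risingFactorial α hk * risingFactorial (α + hk) m := rf_add α hk m
  have hpos : ∀ j ∈ range m, (0:ℝ) < 2 * (α + hk + j) + 1 := by
    intro j _; positivity
  have hprod : (∏ j ∈ range m, 2 * (α + hk + j)) = 2 ^ m * ∏ j ∈ range m, (α + hk + j) := by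
    rw [Finset.prod_mul_distrib, Finset.prod_const, card_range]
  have hdup : risingFactorial (2 * α + 2 * hk) (2 * m)
      = (∏ j ∈ range m, 2 * (α + hk + j)) * ∏ j ∈ range m, (2 * (α + hk + j) + 1) := by
    rw [h2b, rf_dup]
  refine ⟨?_, ?_, ?_⟩
  · unfold fairCapital
    rw [show hk + m + (hk + m) = 2 * hk + 2 * m from by ring,
      show hk + hk = 2 * hk from by ring, key1, key2]
    field_simp
    ring_nf
    simp only [mul_inv_cancel₀ (show risingFactorial (α * 2) (hk * 2) ≠ 0 by
      rw [mul_comm α, mul_comm hk]; exact hC.ne'), one_mul]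
  · rw [hdup, Finset.prod_div_distrib, hprod]
    have hP : (0:ℝ) < ∏ j ∈ range m, (α + hk + j) := Finset.prod_pos (fun j _ => by positivity)
    have hQ : (0:ℝ) < ∏ j ∈ range m, (2 * (α + hk + j) + 1) := Finset.prod_pos hpos
    rw [risingFactorial]
    field_simp
    ring
  · calc ∏ j ∈ range m, 2 * (α + hk + j) / (2 * (α + hk + j) + 1)
        < ∏ j ∈ range m, 1 := by
          apply Finset.prod_lt_prod_of_nonempty
          · intro j _; positivity
          · intro j hj
            rw [div_lt_one (hpos j hj)]
            · linarith
          · exact nonempty_range_iff.mpr (by omega)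
      _ = 1 := by simp
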